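/- arXiv:0809.0488 — 2 statements merged into one kernel-verified Lean document; each statement's English description precedes it below -/
import Mathlib

section
/- For every n ≥ 1, the number of full binary trees with n leaves avoiding the pattern t2 = node(L, node(node(L,L), L)) equals the number of full binary trees with n leaves avoiding the pattern t3 = node(node(L,L), node(L,L)). -/
/-! For `n ≥ 2` both counts equal `2 ^ (n - 2)`. A tree avoids `t3` iff every internal node has a
leaf child, so each such tree with `n + 1` leaves arises from one with `n` leaves by hanging a leaf
on the left or on the right of a new root. A tree avoids `t2` iff the left child of every right
child is a leaf; each such tree with `n + 1` leaves arises from one with `n` leaves either as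
`node T leaf` or by grafting a leaf as left child of the root's right child. Reading off these
choices as bits gives, for both patterns, a bijection from bit strings of length `n - 2`. -/

inductive BTree : Type
  | leaf : BTree
  | node : BTree → BTree → BTree
  deriving DecidableEq

namespace BTree

def leaves : BTree → ℕ
  | leaf => 1
  | node l r => leaves l + leaves r

def Matches : BTree → BTree → Bool
  | _, leaf => true
  | leaf, node _ _ => false
  | node l r, node tl tr => Matches l tl && Matches r tr

def Contains : BTree → BTree → Bool
  | leaf, t => Matches leaf t
  | node l r, t => Matches (node l r) t || Contains l t || Contains r t

def Avoids (T t : BTree) : Prop := Contains T t = false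

end BTree

namespace BTree

def t2 : BTree := node leaf (node (node leaf leaf) leaf)

def t3 : BTree := node (node leaf leaf) (node leaf leaf)

def Avoiders (t : BTree) (n : ℕ) : Type := {T : BTree // T.leaves = n ∧ T.Avoids t}

theorem leaves_pos (T : BTree) : 0 < T.leaves := by
  induction T with
  | leaf => exact Nat.one_pos
  | node l r _ _ => simp only [leaves]; omega

theorem eq_leaf_of_leaves_eq_one {T : BTree} (h : T.leaves = 1) : T = leaf := by
  cases T with
  | leaf => rfl
  | node l r =>
    have := leaves_pos l
    have := leaves_pos r
    simp only [leaves] at h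
    omega

theorem leaf_avoids {t : BTree} (ht : t ≠ leaf) : leaf.Avoids t := by
  cases t with
  | leaf => exact absurd rfl ht
  | node _ _ => rfl

instance isEmpty_avoiders_zero (t : BTree) : IsEmpty (Avoiders t 0) :=
  ⟨fun T => (leaves_pos T.1).ne' T.2.1⟩

theorem card_avoiders_one {t : BTree} (ht : t ≠ leaf) : Nat.card (Avoiders t 1) = 1 := by
  rw [Nat.card_eq_one_iff_exists]
  exact ⟨⟨leaf, rfl, leaf_avoids ht⟩,
    fun T => Subtype.ext (eq_leaf_of_leaves_eq_one T.2.1)⟩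

theorem card_avoiders_eq_two_pow {t : BTree} (f : List Bool → BTree) (hf : f.Injective)
    (hleaves : ∀ bs, (f bs).leaves = bs.length + 2) (havoids : ∀ bs, (f bs).Avoids t)
    (hrange : ∀ T : BTree, T ≠ leaf → T.Avoids t → T ∈ Set.range f) (m : ℕ) :
    Nat.card (Avoiders t (m + 2)) = 2 ^ m := by
  let e : List.Vector Bool m → Avoiders t (m + 2) :=
    fun v => ⟨f v.1, by rw [hleaves, v.2], havoids v.1⟩
  have he : e.Bijective := by
    refine ⟨fun v w h => Subtype.ext (hf (congrArg Subtype.val h)), ?_⟩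
    rintro ⟨T, hT, hA⟩
    obtain ⟨bs, rfl⟩ := hrange T (by rintro rfl; simp [leaves] at hT) hA
    exact ⟨⟨bs, by simpa [hleaves] using hT⟩, rfl⟩
  rw [← Nat.card_congr (Equiv.ofBijective e he), Nat.card_eq_fintype_card, card_vector,
    Fintype.card_bool]

theorem avoids_t3_node {l r : BTree} :
    (node l r).Avoids t3 ↔ l.Avoids t3 ∧ r.Avoids t3 ∧ (l = leaf ∨ r = leaf) := by
  cases l <;> cases r <;> simp [Avoids, Contains, Matches, t3]

def t3Avoider : List Bool → BTree
  | [] => node leaf leaf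
  | true :: bs => node leaf (t3Avoider bs)
  | false :: bs => node (t3Avoider bs) leaf

theorem leaves_t3Avoider (bs : List Bool) : (t3Avoider bs).leaves = bs.length + 2 := by
  induction bs with
  | nil => rfl
  | cons b bs ih =>
    cases b <;> simp only [t3Avoider, leaves, ih, List.length_cons]
    omega

theorem t3Avoider_ne_leaf (bs : List Bool) : t3Avoider bs ≠ leaf := by
  cases bs with
  | nil => nofun
  | cons b _ => cases b <;> nofun

theorem t3Avoider_avoids (bs : List Bool) : (t3Avoider bs).Avoids t3 := by
  induction bs with
  | nil => rfl
  | cons b bs ih =>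
    cases b
    · exact avoids_t3_node.2 ⟨ih, rfl, Or.inr rfl⟩
    · exact avoids_t3_node.2 ⟨rfl, ih, Or.inl rfl⟩

theorem t3Avoider_injective : t3Avoider.Injective := by
  have hne := t3Avoider_ne_leaf
  intro bs bs' h
  induction bs generalizing bs' with
  | nil => cases bs' with
    | nil => rfl
    | cons b' _ => cases b' <;> simp [t3Avoider, eq_comm (a := leaf), hne] at h
  | cons b bs ih => cases bs' with
    | nil => cases b <;> simp [t3Avoider, hne] at h
    | cons b' _ =>
      cases b <;> cases b' <;> simp [t3Avoider, eq_comm (a := leaf), hne] at h ⊢ <;> exact ih h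

theorem mem_range_t3Avoider :
    ∀ T : BTree, T ≠ leaf → T.Avoids t3 → T ∈ Set.range t3Avoider
  | leaf, hT, _ => absurd rfl hT
  | node leaf leaf, _, _ => ⟨[], rfl⟩
  | node leaf (node a b), _, hA => by
    obtain ⟨bs, hbs⟩ := mem_range_t3Avoider (node a b) nofun (avoids_t3_node.1 hA).2.1
    exact ⟨true :: bs, by rw [t3Avoider, hbs]⟩
  | node (node a b) leaf, _, hA => by
    obtain ⟨bs, hbs⟩ := mem_range_t3Avoider (node a b) nofun (avoids_t3_node.1 hA).1
    exact ⟨false :: bs, by rw [t3Avoider, hbs]⟩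
  | node (node _ _) (node _ _), _, hA => by simp [avoids_t3_node] at hA

theorem card_avoiders_t3 (m : ℕ) : Nat.card (Avoiders t3 (m + 2)) = 2 ^ m :=
  card_avoiders_eq_two_pow t3Avoider t3Avoider_injective leaves_t3Avoider t3Avoider_avoids
    mem_range_t3Avoider m

theorem avoids_t2_node {l r : BTree} :
    (node l r).Avoids t2 ↔ l.Avoids t2 ∧ r.Avoids t2 ∧ ∀ a b c, r ≠ node (node a b) c := by
  cases r with
  | leaf => simp [Avoids, Contains, Matches, t2]
  | node rl rr => cases rl <;> simp [Avoids, Contains, Matches, t2]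

def graft : BTree → BTree
  | leaf => leaf
  | node l r => node l (node leaf r)

theorem graft_injective : graft.Injective := by
  rintro (_ | ⟨l, r⟩) (_ | ⟨l', r'⟩) h <;> simp_all [graft]

theorem graft_avoids_t2_iff {T : BTree} : (graft T).Avoids t2 ↔ T.Avoids t2 := by
  cases T with
  | leaf => rfl
  | node l r =>
    simp [graft, avoids_t2_node, leaf_avoids (t := t2) (by decide)]

def t2Avoider : List Bool → BTree
  | [] => node leaf leaf
  | true :: bs => node (t2Avoider bs) leaf
  | false :: bs => graft (t2Avoider bs)

theorem exists_t2Avoider_eq_node (bs : List Bool) : ∃ l r, t2Avoider bs = node l r := by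
  cases bs with
  | nil => exact ⟨_, _, rfl⟩
  | cons b bs =>
    obtain ⟨l, r, h⟩ := exists_t2Avoider_eq_node bs
    cases b
    · exact ⟨_, _, by rw [t2Avoider, h, graft]⟩
    · exact ⟨_, _, rfl⟩

theorem leaves_t2Avoider (bs : List Bool) : (t2Avoider bs).leaves = bs.length + 2 := by
  induction bs with
  | nil => rfl
  | cons b bs ih =>
    obtain ⟨l, r, h⟩ := exists_t2Avoider_eq_node bs
    rw [h] at ih
    cases b <;> simp only [t2Avoider, h, graft, leaves, List.length_cons] at ih ⊢ <;> omega

theorem t2Avoider_avoids (bs : List Bool) : (t2Avoider bs).Avoids t2 := by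
  induction bs with
  | nil => rfl
  | cons b bs ih =>
    cases b
    · exact graft_avoids_t2_iff.2 ih
    · exact avoids_t2_node.2 ⟨ih, rfl, nofun⟩

theorem t2Avoider_injective : t2Avoider.Injective := by
  intro bs bs' h
  induction bs generalizing bs' with
  | nil =>
    cases bs' with
    | nil => rfl
    | cons b' bs' =>
      obtain ⟨l, r, h'⟩ := exists_t2Avoider_eq_node bs'
      cases b' <;> simp [t2Avoider, h', graft] at h
  | cons b bs ih =>
    obtain ⟨l, r, h₁⟩ := exists_t2Avoider_eq_node bs
    cases bs' with
    | nil => cases b <;> simp [t2Avoider, h₁, graft] at h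
    | cons b' bs' =>
      obtain ⟨l', r', h₂⟩ := exists_t2Avoider_eq_node bs'
      cases b <;> cases b'
      · exact congrArg _ (ih (graft_injective h))
      · simp [t2Avoider, h₁, graft] at h
      · simp [t2Avoider, h₂, graft] at h
      · exact congrArg _ (ih (node.inj h).1)

theorem mem_range_t2Avoider :
    ∀ T : BTree, T ≠ leaf → T.Avoids t2 → T ∈ Set.range t2Avoider
  | leaf, hT, _ => absurd rfl hT
  | node leaf leaf, _, _ => ⟨[], rfl⟩
  | node (node a b) leaf, _, hA => by
    obtain ⟨bs, hbs⟩ := mem_range_t2Avoider (node a b) nofun (avoids_t2_node.1 hA).1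
    exact ⟨true :: bs, by rw [t2Avoider, hbs]⟩
  | node l (node leaf r), _, hA => by
    obtain ⟨bs, hbs⟩ := mem_range_t2Avoider (node l r) nofun (graft_avoids_t2_iff.1 hA)
    exact ⟨false :: bs, by rw [t2Avoider, hbs, graft]⟩
  | node _ (node (node a b) c), _, hA => absurd rfl ((avoids_t2_node.1 hA).2.2 a b c)
termination_by T => T.leaves
decreasing_by all_goals simp only [leaves]; omega

theorem card_avoiders_t2 (m : ℕ) : Nat.card (Avoiders t2 (m + 2)) = 2 ^ m :=
  card_avoiders_eq_two_pow t2Avoider t2Avoider_injective leaves_t2Avoider t2Avoider_avoids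
    mem_range_t2Avoider m

end BTree

theorem stmt_11_general (n : ℕ) :
    Nat.card {T : BTree //
      T.leaves = n ∧ T.Avoids (.node .leaf (.node (.node .leaf .leaf) .leaf))} =
    Nat.card {T : BTree //
      T.leaves = n ∧ T.Avoids (.node (.node .leaf .leaf) (.node .leaf .leaf))} := by
  change Nat.card (BTree.Avoiders BTree.t2 n) = Nat.card (BTree.Avoiders BTree.t3 n)
  match n with
  | 0 => simp only [Nat.card_of_isEmpty]
  | 1 => rw [BTree.card_avoiders_one (t := BTree.t2) (by decide),
      BTree.card_avoiders_one (t := BTree.t3) (by decide)]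
  | m + 2 => rw [BTree.card_avoiders_t2, BTree.card_avoiders_t3]

theorem stmt_11 (n : ℕ) (hn : 1 ≤ n) :
    Nat.card {T : BTree //
      T.leaves = n ∧ T.Avoids (.node .leaf (.node (.node .leaf .leaf) .leaf))} =
    Nat.card {T : BTree //
      T.leaves = n ∧ T.Avoids (.node (.node .leaf .leaf) (.node .leaf .leaf))} :=
  stmt_11_general n
end

section
/- Let a(n) be the number of full binary trees with n leaves avoiding the left comb pattern with 4 leaves. Then a(1) = 1 and for all n ≥ 1, a(n+1) = a(n) + Σ_{k=1}^{n-1} a(k)·a(n-k) (the Motzkin recurrence shifted by one). -/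
noncomputable def a (n : ℕ) : ℕ :=
  Nat.card {T : BTree //
    T.leaves = n ∧ T.Avoids (.node (.node (.node .leaf .leaf) .leaf) .leaf)}

/-!
A tree avoids the left comb with four leaves exactly when its left subtree is a leaf, or is
`node leaf x`, and the remaining subtrees avoid the comb. Peeling off this left spine gives a
bijection between avoiding trees with `n + 1` leaves and the disjoint union of avoiding trees with
`n` leaves and pairs of avoiding trees with `k` and `n - k` leaves; counting both sides gives the
recurrence.
-/

namespace BTree

def leftComb : BTree := node (node (node leaf leaf) leaf) leaf

lemma one_le_leaves (T : BTree) : 1 ≤ T.leaves := by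
  induction T with
  | leaf => rfl
  | node l r _ _ => simp only [leaves]; omega

lemma leaves_eq_one_iff {T : BTree} : T.leaves = 1 ↔ T = leaf := by
  cases T with
  | leaf => simp [leaves]
  | node l r =>
    have := one_le_leaves l
    have := one_le_leaves r
    simp only [leaves, reduceCtorEq, iff_false]
    omega

lemma avoids_leaf : leaf.Avoids leftComb := rfl

lemma avoids_node_leaf_iff (r : BTree) :
    (node leaf r).Avoids leftComb ↔ r.Avoids leftComb := by
  simp [Avoids, Contains, Matches, leftComb]

lemma avoids_node_node_leaf_iff (x r : BTree) :
    (node (node leaf x) r).Avoids leftComb ↔ x.Avoids leftComb ∧ r.Avoids leftComb := by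
  simp [Avoids, Contains, Matches, leftComb]

lemma not_avoids_node_node_node (t₁ t₂ t₃ r : BTree) :
    ¬ (node (node (node t₁ t₂) t₃) r).Avoids leftComb := by
  simp [Avoids, Contains, Matches, leftComb]

abbrev AvoidingTrees (n : ℕ) : Type := {T : BTree // T.leaves = n ∧ T.Avoids leftComb}

lemma a_eq_card (n : ℕ) : a n = Nat.card (AvoidingTrees n) := rfl

instance : IsEmpty (AvoidingTrees 0) :=
  ⟨fun T => by have := one_le_leaves T.1; omega⟩

instance : Unique (AvoidingTrees 1) where
  default := ⟨leaf, rfl, avoids_leaf⟩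
  uniq T := Subtype.ext (leaves_eq_one_iff.1 T.2.1)

abbrev SpineParts (n : ℕ) : Type :=
  AvoidingTrees n ⊕ Σ k : Finset.Icc 1 (n - 1), AvoidingTrees k × AvoidingTrees (n - k)

def spineDecomp (n : ℕ) (hn : 1 ≤ n) : AvoidingTrees (n + 1) → SpineParts n
  | ⟨leaf, h⟩ => absurd h.1 (by simp only [leaves]; omega)
  | ⟨node leaf r, h⟩ =>
    .inl ⟨r, by simpa [leaves, add_comm] using h.1, (avoids_node_leaf_iff r).1 h.2⟩
  | ⟨node (node leaf x) r, h⟩ =>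
    have hleaves : 1 + x.leaves + r.leaves = n + 1 := h.1
    have := one_le_leaves r
    .inr ⟨⟨x.leaves, Finset.mem_Icc.2 ⟨one_le_leaves x, by omega⟩⟩,
      ⟨x, rfl, ((avoids_node_node_leaf_iff x r).1 h.2).1⟩,
      ⟨r, by dsimp only; omega, ((avoids_node_node_leaf_iff x r).1 h.2).2⟩⟩
  | ⟨node (node (node t₁ t₂) t₃) r, h⟩ =>
    absurd h.2 (not_avoids_node_node_node t₁ t₂ t₃ r)

def spineComp (n : ℕ) : SpineParts n → AvoidingTrees (n + 1)
  | .inl ⟨r, hr⟩ =>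
    ⟨node leaf r, by simp [leaves, hr.1, add_comm], (avoids_node_leaf_iff r).2 hr.2⟩
  | .inr ⟨⟨k, hk⟩, ⟨x, hx⟩, ⟨r, hr⟩⟩ =>
    ⟨node (node leaf x) r, by
      have := (Finset.mem_Icc.1 hk).2
      simp only [leaves, hx.1, hr.1]
      omega, (avoids_node_node_leaf_iff x r).2 ⟨hx.2, hr.2⟩⟩

def spineEquiv (n : ℕ) (hn : 1 ≤ n) : AvoidingTrees (n + 1) ≃ SpineParts n where
  toFun := spineDecomp n hn
  invFun := spineComp n
  left_inv
    | ⟨leaf, h⟩ => absurd h.1 (by simp only [leaves]; omega)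
    | ⟨node leaf r, h⟩ => rfl
    | ⟨node (node leaf x) r, h⟩ => rfl
    | ⟨node (node (node t₁ t₂) t₃) r, h⟩ =>
    absurd h.2 (not_avoids_node_node_node t₁ t₂ t₃ r)
  right_inv := by
    rintro (_ | ⟨⟨k, _⟩, ⟨x, hx, _⟩, _⟩)
    · rfl
    · obtain rfl : x.leaves = k := hx
      rfl

instance finite_avoidingTrees (n : ℕ) : Finite (AvoidingTrees n) := by
  induction n using Nat.strong_induction_on with
  | _ n ih =>
  match n, ih with
  | 0, _ => infer_instance
  | 1, _ => infer_instance
  | m + 2, ih =>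
    have := ih (m + 1) (by omega)
    have (k : Finset.Icc 1 m) : Finite (AvoidingTrees k × AvoidingTrees (m + 1 - k)) := by
      have := Finset.mem_Icc.1 k.2
      have := ih k (by omega)
      have := ih (m + 1 - k) (by omega)
      infer_instance
    exact Finite.of_equiv _ (spineEquiv (m + 1) (by omega)).symm

end BTree

open BTree in
theorem stmt_13 :
    a 1 = 1 ∧
    ∀ n : ℕ, 1 ≤ n →
      a (n + 1) = a n + ∑ k ∈ Finset.Icc 1 (n - 1), a k * a (n - k) := by
  refine ⟨(a_eq_card 1).trans Nat.card_unique, fun n hn => ?_⟩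
  rw [a_eq_card, Nat.card_congr (spineEquiv n hn), Nat.card_sum, Nat.card_sigma]
  simp only [Nat.card_prod, ← a_eq_card]
  exact congrArg (a n + ·) (Finset.sum_coe_sort _ fun k => a k * a (n - k))
end
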